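/- arXiv:2206.02563 — 2 statements merged into one kernel-verified Lean document; each statement's English description precedes it below -/
import Mathlib

section
/- (Moore–Aronszajn, uniqueness) Let X be a nonempty set and K : X × X → ℝ a kernel function. Suppose (H, φ) and (H', φ') are two pairs each consisting of a real Hilbert space and a map φ : X → H (resp. φ' : X → H') such that K(x,y) = ⟪φ(y), φ(x)⟫_H = ⟪φ'(y), φ'(x)⟫_{H'} for all x, y ∈ X, and the linear spans of φ(X) and φ'(X) are dense in H and H' respectively. Then there exists a unique linear isometric isomorphism U : H → H' such that U(φ(x)) = φ'(x) for all x ∈ X. -/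
/-! Since `K` is the Gram kernel of both `φ` and `φ'`, the assignment
`∑ cᵢ φ xᵢ ↦ ∑ cᵢ φ' xᵢ` is well defined and norm-preserving between the two spans; as both
spans are dense and both spaces complete, it extends to a linear isometric isomorphism, and any
two such isomorphisms agree on the dense span of `φ`, hence everywhere. -/

open scoped RealInnerProductSpace

section FeatureMaps

open Finsupp Submodule

variable {𝕜 X E F : Type*} [RCLike 𝕜]
  [NormedAddCommGroup E] [InnerProductSpace 𝕜 E] [NormedAddCommGroup F] [InnerProductSpace 𝕜 F]

theorem inner_linearCombination_eq_of_inner_eq {φ : X → E} {ψ : X → F}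
    (h : ∀ a b, inner 𝕜 (φ a) (φ b) = inner 𝕜 (ψ a) (ψ b)) (f g : X →₀ 𝕜) :
    inner 𝕜 (linearCombination 𝕜 φ f) (linearCombination 𝕜 φ g) =
      inner 𝕜 (linearCombination 𝕜 ψ f) (linearCombination 𝕜 ψ g) := by
  simp only [linearCombination_apply, Finsupp.sum, sum_inner, inner_sum, inner_smul_left,
    inner_smul_right, h]

theorem norm_linearCombination_eq_of_inner_eq {φ : X → E} {ψ : X → F}
    (h : ∀ a b, inner 𝕜 (φ a) (φ b) = inner 𝕜 (ψ a) (ψ b)) (f : X →₀ 𝕜) :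
    ‖linearCombination 𝕜 φ f‖ = ‖linearCombination 𝕜 ψ f‖ := by
  rw [@norm_eq_sqrt_re_inner 𝕜, @norm_eq_sqrt_re_inner 𝕜,
    inner_linearCombination_eq_of_inner_eq h]

theorem denseRange_linearCombination {φ : X → E} (hφ : Dense (span 𝕜 (Set.range φ) : Set E)) :
    DenseRange (linearCombination 𝕜 φ) := by
  rwa [DenseRange, ← LinearMap.coe_range, range_linearCombination]

variable [CompleteSpace E] [CompleteSpace F]

/- Extending the identity of `X →₀ 𝕜` along the two (non-injective) `linearCombination` maps
avoids passing to the quotient by their common kernel. -/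
noncomputable def LinearIsometryEquiv.ofInnerEq (φ : X → E) (ψ : X → F)
    (h : ∀ a b, inner 𝕜 (φ a) (φ b) = inner 𝕜 (ψ a) (ψ b))
    (hφ : Dense (span 𝕜 (Set.range φ) : Set E)) (hψ : Dense (span 𝕜 (Set.range ψ) : Set F)) :
    E ≃ₗᵢ[𝕜] F :=
  (LinearEquiv.refl 𝕜 (X →₀ 𝕜)).extendOfIsometry (linearCombination 𝕜 φ)
    (linearCombination 𝕜 ψ) (denseRange_linearCombination hφ) (denseRange_linearCombination hψ)
    fun f => (norm_linearCombination_eq_of_inner_eq h f).symm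

theorem LinearIsometryEquiv.ofInnerEq_apply (φ : X → E) (ψ : X → F)
    (h : ∀ a b, inner 𝕜 (φ a) (φ b) = inner 𝕜 (ψ a) (ψ b))
    (hφ : Dense (span 𝕜 (Set.range φ) : Set E)) (hψ : Dense (span 𝕜 (Set.range ψ) : Set F))
    (x : X) : LinearIsometryEquiv.ofInnerEq φ ψ h hφ hψ (φ x) = ψ x := by
  simpa [ofInnerEq] using LinearEquiv.extendOfIsometry_eq (LinearEquiv.refl 𝕜 (X →₀ 𝕜))
    (linearCombination 𝕜 φ) (linearCombination 𝕜 ψ) _ _ _ (single x 1)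

end FeatureMaps

theorem LinearIsometryEquiv.ext_on_dense_span {𝕜 E F : Type*} [NormedField 𝕜]
    [SeminormedAddCommGroup E] [NormedSpace 𝕜 E] [NormedAddCommGroup F] [NormedSpace 𝕜 F]
    {s : Set E} (hs : Dense (Submodule.span 𝕜 s : Set E)) {U V : E ≃ₗᵢ[𝕜] F}
    (h : Set.EqOn U V s) : U = V :=
  LinearIsometryEquiv.toContinuousLinearEquiv_injective <|
    ContinuousLinearEquiv.coe_injective <| ContinuousLinearMap.ext_on hs h

theorem moore_aronszajn_uniqueness_general {X : Type*} (K : X → X → ℝ)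
    {H : Type*} [NormedAddCommGroup H] [InnerProductSpace ℝ H] [CompleteSpace H]
    {H' : Type*} [NormedAddCommGroup H'] [InnerProductSpace ℝ H'] [CompleteSpace H']
    (φ : X → H) (φ' : X → H')
    (hφ : ∀ x y : X, K x y = ⟪φ y, φ x⟫)
    (hφ' : ∀ x y : X, K x y = ⟪φ' y, φ' x⟫)
    (hdense : Dense (Submodule.span ℝ (Set.range φ) : Set H))
    (hdense' : Dense (Submodule.span ℝ (Set.range φ') : Set H')) :
    ∃! U : H ≃ₗᵢ[ℝ] H', ∀ x : X, U (φ x) = φ' x := by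
  have hinner : ∀ a b, ⟪φ a, φ b⟫ = ⟪φ' a, φ' b⟫ := fun a b => by rw [← hφ, ← hφ']
  refine ⟨.ofInnerEq φ φ' hinner hdense hdense',
    LinearIsometryEquiv.ofInnerEq_apply φ φ' hinner hdense hdense',
    fun V hV => LinearIsometryEquiv.ext_on_dense_span hdense ?_⟩
  rintro _ ⟨x, rfl⟩
  rw [hV, LinearIsometryEquiv.ofInnerEq_apply]

/-- **Moore–Aronszajn theorem (uniqueness).** Two Hilbert-space realizations
`(H, φ)` and `(H', φ')` of the same kernel function `K`, each with dense span of
the feature-map range, are related by a unique linear isometric isomorphism `U`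
with `U (φ x) = φ' x` for all `x`. -/
theorem moore_aronszajn_uniqueness {X : Type*} [Nonempty X] (K : X → X → ℝ)
    (hsymm : ∀ x y : X, K x y = K y x)
    (hpsd : ∀ (m : ℕ), 1 ≤ m → ∀ (a : Fin m → ℝ) (x : Fin m → X),
      0 ≤ ∑ i, ∑ j, a i * a j * K (x i) (x j))
    {H : Type*} [NormedAddCommGroup H] [InnerProductSpace ℝ H] [CompleteSpace H]
    {H' : Type*} [NormedAddCommGroup H'] [InnerProductSpace ℝ H'] [CompleteSpace H']
    (φ : X → H) (φ' : X → H')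
    (hφ : ∀ x y : X, K x y = ⟪φ y, φ x⟫)
    (hφ' : ∀ x y : X, K x y = ⟪φ' y, φ' x⟫)
    (hdense : Dense (Submodule.span ℝ (Set.range φ) : Set H))
    (hdense' : Dense (Submodule.span ℝ (Set.range φ') : Set H')) :
    ∃! U : H ≃ₗᵢ[ℝ] H', ∀ x : X, U (φ x) = φ' x :=
  moore_aronszajn_uniqueness_general K φ φ' hφ hφ' hdense hdense'
end

section
/- For every α > 0 and γ > 0, the rational quadratic kernel K(x,y) = (1 + ‖x − y‖₂²/(2αγ²))^{−α} on ℝ^d is a kernel function: it is symmetric and positive semi-definite, i.e. Σ_{i=1}^m Σ_{j=1}^m a_i a_j (1 + ‖x_i − x_j‖₂²/(2αγ²))^{−α} ≥ 0 for all m ≥ 1, a ∈ ℝ^m, x_1,…,x_m ∈ ℝ^d. -/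
/-!
A Gram matrix is positive semidefinite, so `⟪x, y⟫` is a kernel; by the Schur product theorem
kernels are closed under products, hence under power series with nonnegative coefficients such
as `exp`. Since `‖x - y‖² = ‖x‖² - 2⟪x, y⟫ + ‖y‖²`, the Gaussian `exp (-c‖x - y‖²)` is
`f x * exp (2c⟪x, y⟫) * f y` with `f x = exp (-c‖x‖²)`, again a kernel. Finally the Gamma integral
`r ^ (-α) = Γ(α)⁻¹ ∫₀^∞ s ^ (α - 1) e ^ (-r s) ds` with `r = 1 + c‖x - y‖²` writes the rational
quadratic kernel as a mixture of Gaussians with nonnegative weights.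
-/

open MeasureTheory Set Matrix Real
open scoped InnerProductSpace

structure IsKernelFunction {X : Type*} (K : X → X → ℝ) : Prop where
  symm : ∀ x y, K x y = K y x
  nonneg : ∀ (m : ℕ) (a : Fin m → ℝ) (x : Fin m → X), 0 ≤ ∑ i, ∑ j, a i * a j * K (x i) (x j)

theorem Matrix.dotProduct_mulVec_eq_sum_sum {n R : Type*} [Fintype n] [CommSemiring R]
    (M : Matrix n n R) (a : n → R) :
    a ⬝ᵥ (M *ᵥ a) = ∑ i, ∑ j, a i * a j * M i j := by
  simp only [dotProduct, mulVec, Finset.mul_sum]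
  exact Finset.sum_congr rfl fun i _ => Finset.sum_congr rfl fun j _ => by ring

namespace IsKernelFunction

variable {X : Type*} {K L : X → X → ℝ}

theorem posSemidef (hK : IsKernelFunction K) {m : ℕ} (x : Fin m → X) :
    (Matrix.of fun i j => K (x i) (x j)).PosSemidef :=
  .of_dotProduct_mulVec_nonneg (IsHermitian.ext fun i j => (hK.symm _ _).symm) fun a => by
    rw [star_trivial, dotProduct_mulVec_eq_sum_sum]; exact hK.nonneg m a x

theorem one : IsKernelFunction fun _ _ : X => (1 : ℝ) where
  symm _ _ := rfl
  nonneg m a _ := by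
    simp only [mul_one, ← Finset.sum_mul_sum]
    exact mul_self_nonneg _

theorem mul (hK : IsKernelFunction K) (hL : IsKernelFunction L) :
    IsKernelFunction fun x y => K x y * L x y where
  symm x y := by rw [hK.symm, hL.symm]
  nonneg m a x := by
    have h := ((hK.posSemidef x).hadamard (hL.posSemidef x)).dotProduct_mulVec_nonneg a
    rwa [star_trivial, dotProduct_mulVec_eq_sum_sum] at h

theorem pow (hK : IsKernelFunction K) (n : ℕ) : IsKernelFunction fun x y => K x y ^ n := by
  induction n with
  | zero => simpa using one
  | succ n ih => simpa only [pow_succ] using ih.mul hK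

theorem const_mul (hK : IsKernelFunction K) {c : ℝ} (hc : 0 ≤ c) :
    IsKernelFunction fun x y => c * K x y where
  symm x y := by rw [hK.symm]
  nonneg m a x := by
    have h : ∑ i, ∑ j, a i * a j * (c * K (x i) (x j)) =
        c * ∑ i, ∑ j, a i * a j * K (x i) (x j) := by
      simp only [Finset.mul_sum]
      exact Finset.sum_congr rfl fun i _ => Finset.sum_congr rfl fun j _ => by ring
    rw [h]; exact mul_nonneg hc (hK.nonneg m a x)

theorem mul_left_right (hK : IsKernelFunction K) (f : X → ℝ) :
    IsKernelFunction fun x y => f x * K x y * f y where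
  symm x y := by rw [hK.symm]; ring
  nonneg m a x := by
    convert hK.nonneg m (fun i => a i * f (x i)) x using 3 with i _ j _
    ring

theorem tsum {K : ℕ → X → X → ℝ} (hK : ∀ n, IsKernelFunction (K n))
    (hs : ∀ x y, Summable fun n => K n x y) : IsKernelFunction fun x y => ∑' n, K n x y where
  symm x y := tsum_congr fun n => (hK n).symm x y
  nonneg m a x := by
    have h : ∑ i, ∑ j, a i * a j * ∑' n, K n (x i) (x j) =
        ∑' n, ∑ i, ∑ j, a i * a j * K n (x i) (x j) := by
      simp only [← tsum_mul_left]
      rw [Summable.tsum_finsetSum fun i _ => summable_sum fun j _ => (hs _ _).mul_left _]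
      exact Finset.sum_congr rfl fun i _ =>
        (Summable.tsum_finsetSum fun j _ => (hs _ _).mul_left _).symm
    rw [h]; exact tsum_nonneg fun n => (hK n).nonneg m a x

theorem exp (hK : IsKernelFunction K) : IsKernelFunction fun x y => Real.exp (K x y) := by
  simp only [Real.exp_eq_exp_ℝ, NormedSpace.exp_eq_tsum_div, div_eq_inv_mul]
  exact tsum (fun n => (hK.pow n).const_mul (by positivity))
    fun x y => by simpa only [div_eq_inv_mul] using Real.summable_pow_div_factorial (K x y)

theorem integral {T : Type*} [MeasurableSpace T] {μ : Measure T} {K : T → X → X → ℝ}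
    (hK : ∀ᵐ t ∂μ, IsKernelFunction (K t)) (hint : ∀ x y, Integrable (fun t => K t x y) μ) :
    IsKernelFunction fun x y => ∫ t, K t x y ∂μ where
  symm x y := integral_congr_ae (hK.mono fun t ht => ht.symm x y)
  nonneg m a x := by
    have h : ∑ i, ∑ j, a i * a j * ∫ t, K t (x i) (x j) ∂μ =
        ∫ t, ∑ i, ∑ j, a i * a j * K t (x i) (x j) ∂μ := by
      simp only [← integral_const_mul]
      rw [integral_finsetSum _ fun i _ => integrable_finsetSum _ fun j _ => (hint _ _).const_mul _]
      exact Finset.sum_congr rfl fun i _ =>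
        (integral_finsetSum _ fun j _ => (hint _ _).const_mul _).symm
    rw [h]; exact integral_nonneg_of_ae (hK.mono fun t ht => ht.nonneg m a x)

end IsKernelFunction

theorem Real.rpow_neg_eq_integral_rpow_mul_exp_neg_mul {α r : ℝ} (hα : 0 < α) (hr : 0 < r) :
    r ^ (-α) = ∫ s in Ioi 0, (Gamma α)⁻¹ * s ^ (α - 1) * Real.exp (-(r * s)) := by
  simp only [mul_assoc]
  rw [integral_const_mul, integral_rpow_mul_exp_neg_mul_Ioi hα hr, one_div,
    inv_rpow hr.le, ← rpow_neg hr.le, mul_comm (r ^ (-α)),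
    inv_mul_cancel_left₀ (Gamma_pos_of_pos hα).ne']

section InnerProductSpace

variable {E : Type*} [NormedAddCommGroup E] [InnerProductSpace ℝ E]

theorem isKernelFunction_inner : IsKernelFunction fun x y : E => ⟪x, y⟫_ℝ where
  symm x y := real_inner_comm y x
  nonneg m a x := by
    have h := (posSemidef_gram ℝ x).dotProduct_mulVec_nonneg a
    rwa [star_trivial, dotProduct_mulVec_eq_sum_sum] at h

theorem isKernelFunction_exp_neg_mul_norm_sub_sq {c : ℝ} (hc : 0 ≤ c) :
    IsKernelFunction fun x y : E => Real.exp (-(c * ‖x - y‖ ^ 2)) := by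
  convert (isKernelFunction_inner.const_mul (by positivity : 0 ≤ 2 * c)).exp.mul_left_right
    (fun x : E => Real.exp (-(c * ‖x‖ ^ 2))) using 3 with x y
  rw [norm_sub_sq_real, ← Real.exp_add, ← Real.exp_add]
  ring_nf

theorem isKernelFunction_one_add_mul_norm_sub_sq_rpow_neg {α c : ℝ} (hα : 0 < α) (hc : 0 ≤ c) :
    IsKernelFunction fun x y : E => (1 + c * ‖x - y‖ ^ 2) ^ (-α) := by
  have hr : ∀ x y : E, 0 < 1 + c * ‖x - y‖ ^ 2 := fun x y => by positivity
  have hK : ∀ᵐ s ∂(volume.restrict (Ioi (0 : ℝ))), IsKernelFunction fun x y : E =>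
      (Gamma α)⁻¹ * s ^ (α - 1) * Real.exp (-((1 + c * ‖x - y‖ ^ 2) * s)) := by
    filter_upwards [ae_restrict_mem measurableSet_Ioi] with s (hs : 0 < s)
    have hcoeff : 0 ≤ (Gamma α)⁻¹ * s ^ (α - 1) * Real.exp (-s) := by
      have := Gamma_pos_of_pos hα
      have := rpow_pos_of_pos hs (α - 1)
      positivity
    convert (isKernelFunction_exp_neg_mul_norm_sub_sq (E := E) (mul_nonneg hc hs.le)).const_mul
      hcoeff using 3 with x y
    rw [mul_assoc _ (Real.exp _), ← Real.exp_add]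
    ring_nf
  have hint : ∀ x y : E, Integrable
      (fun s => (Gamma α)⁻¹ * s ^ (α - 1) * Real.exp (-((1 + c * ‖x - y‖ ^ 2) * s)))
      (volume.restrict (Ioi 0)) :=
    fun x y => by
      simpa only [rpow_one, neg_mul, mul_assoc] using
        (integrableOn_rpow_mul_exp_neg_mul_rpow (by linarith) one_pos (hr x y)).const_mul
          (Gamma α)⁻¹
  convert IsKernelFunction.integral hK hint using 3 with x y
  exact rpow_neg_eq_integral_rpow_mul_exp_neg_mul hα (hr x y)

end InnerProductSpace

theorem rational_quadratic_kernel_is_kernel_function_general {d : ℕ} (α γ : ℝ)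
    (hα : 0 < α) :
    (∀ x y : EuclideanSpace ℝ (Fin d),
      (1 + ‖x - y‖ ^ 2 / (2 * α * γ ^ 2)) ^ (-α) =
        (1 + ‖y - x‖ ^ 2 / (2 * α * γ ^ 2)) ^ (-α)) ∧
    ∀ (m : ℕ), 1 ≤ m → ∀ (a : Fin m → ℝ) (x : Fin m → EuclideanSpace ℝ (Fin d)),
      0 ≤ ∑ i, ∑ j, a i * a j *
        (1 + ‖x i - x j‖ ^ 2 / (2 * α * γ ^ 2)) ^ (-α) := by
  have hK : IsKernelFunction fun x y : EuclideanSpace ℝ (Fin d) =>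
      (1 + ‖x - y‖ ^ 2 / (2 * α * γ ^ 2)) ^ (-α) := by
    simpa only [div_eq_inv_mul] using
      isKernelFunction_one_add_mul_norm_sub_sq_rpow_neg hα (by positivity : 0 ≤ (2 * α * γ ^ 2)⁻¹)
  exact ⟨hK.symm, fun m _ => hK.nonneg m⟩

/-- The rational quadratic kernel `K x y = (1 + ‖x - y‖₂² / (2αγ²))^(-α)` on `ℝ^d`,
with `α > 0` and `γ > 0`, is a kernel function: symmetric and positive
semi-definite. -/
theorem rational_quadratic_kernel_is_kernel_function {d : ℕ} (α γ : ℝ)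
    (hα : 0 < α) (hγ : 0 < γ) :
    (∀ x y : EuclideanSpace ℝ (Fin d),
      (1 + ‖x - y‖ ^ 2 / (2 * α * γ ^ 2)) ^ (-α) =
        (1 + ‖y - x‖ ^ 2 / (2 * α * γ ^ 2)) ^ (-α)) ∧
    ∀ (m : ℕ), 1 ≤ m → ∀ (a : Fin m → ℝ) (x : Fin m → EuclideanSpace ℝ (Fin d)),
      0 ≤ ∑ i, ∑ j, a i * a j *
        (1 + ‖x i - x j‖ ^ 2 / (2 * α * γ ^ 2)) ^ (-α) :=
  rational_quadratic_kernel_is_kernel_function_general α γ hα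
end
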